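/- Let 𝒞 be a normal category. If m∘m' and m' are subobject-essential monomorphisms, then m is a subobject-essential monomorphism (in particular m is a monomorphism). -/

import Mathlib

open CategoryTheory CategoryTheory.Limits

universe v u

variable (C : Type u) [Category.{v} C]

/-- A normal category: a pointed regular category (pullback-stable
(regular epi, mono) factorizations) in which every regular epimorphism is a
normal epimorphism. -/
class IsNormalCategory [HasFiniteLimits C] [HasZeroObject C]
    [HasZeroMorphisms C] : Prop where
  /-- every morphism factors as a regular epimorphism followed by a monomorphism -/
  fac : ∀ ⦃X Y : C⦄ (f : X ⟶ Y), ∃ (I : C) (e : X ⟶ I) (i : I ⟶ Y),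
    Nonempty (RegularEpi e) ∧ Mono i ∧ e ≫ i = f
  /-- regular epimorphisms are stable under pullback -/
  stable : ∀ ⦃U X M A : C⦄ (p : U ⟶ M) (u : U ⟶ X) (m : M ⟶ A) (x : X ⟶ A),
    IsPullback p u m x → Nonempty (RegularEpi m) → Nonempty (RegularEpi u)
  /-- every regular epimorphism is a normal epimorphism -/
  normalEpi : ∀ ⦃X Y : C⦄ (f : X ⟶ Y), Nonempty (RegularEpi f) →
    Nonempty (NormalEpi f)

variable {C}

/-- An essential monomorphism: a monomorphism `m` such that `f` is a
monomorphism whenever `m ≫ f` is. -/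
def EssentialMono : MorphismProperty C :=
  fun _ A m => Mono m ∧ ∀ ⦃B : C⦄ (f : A ⟶ B), Mono (m ≫ f) → Mono f

/-- A subobject-essential monomorphism: a monomorphism `m : M ⟶ A` such that
for every monomorphism `n : N ⟶ A`, if `M ×_A N = 0` then `N = 0`. -/
def SubobjEssential [HasFiniteLimits C] [HasZeroObject C] [HasZeroMorphisms C] :
    MorphismProperty C :=
  fun _ A m => Mono m ∧ ∀ ⦃N : C⦄ (n : N ⟶ A), Mono n →
    IsZero (pullback m n) → IsZero N


lemma isZero_of_mono_zero {X Y : C} (f : X ⟶ Y) [HasZeroMorphisms C]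
    (hm : Mono f) (hz : f = 0) : IsZero X := by
  rw [IsZero.iff_id_eq_zero]
  have : 𝟙 X ≫ f = 0 ≫ f := by simp [hz]
  exact (cancel_mono f).mp this

lemma mono_of_isZero_kernel [HasFiniteLimits C] [HasZeroObject C]
    [HasZeroMorphisms C] [IsNormalCategory C] {X Y : C} (f : X ⟶ Y)
    (hk : IsZero (kernel f)) : Mono f := by
  obtain ⟨I, e, i, ⟨he⟩, hi, rfl⟩ := IsNormalCategory.fac f
  obtain ⟨ne⟩ := IsNormalCategory.normalEpi e ⟨he⟩
  have hg : ne.g ≫ e ≫ i = 0 := by rw [reassoc_of% ne.w, zero_comp]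
  have hng : ne.g = 0 := by
    have : ne.g = kernel.lift (e ≫ i) ne.g hg ≫ kernel.ι (e ≫ i) := by simp
    rw [this, hk.eq_of_tgt (kernel.lift (e ≫ i) ne.g hg) 0, zero_comp]
  have hw : ne.g ≫ 𝟙 X = 0 := by simp [hng]
  let r : I ⟶ X := ne.isColimit.desc (CokernelCofork.ofπ (𝟙 X) hw)
  have her : e ≫ r = 𝟙 X :=
    ne.isColimit.fac (CokernelCofork.ofπ (𝟙 X) hw) WalkingParallelPair.one
  have : IsSplitMono e := ⟨⟨⟨r, her⟩⟩⟩
  exact mono_comp e i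

/-- In a normal category, if `m ∘ m'` and `m'` are subobject-essential
monomorphisms, then so is `m`. -/
theorem subobjEssential_weak_right_cancel [HasFiniteLimits C] [HasZeroObject C]
    [HasZeroMorphisms C] [IsNormalCategory C]
    {M' M A : C} (m' : M' ⟶ M) (m : M ⟶ A)
    (h : SubobjEssential (m' ≫ m)) (hm' : SubobjEssential m') :
    SubobjEssential m := by
  have hmm : Mono (m' ≫ m) := h.1
  -- Step 1: the kernel of m is zero, hence m is mono.
  have hker : IsZero (kernel m) := by
    refine hm'.2 (kernel.ι m) inferInstance ?_
    have hc : pullback.fst m' (kernel.ι m) ≫ m' ≫ m = 0 := by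
      rw [← Category.assoc, pullback.condition, Category.assoc, kernel.condition,
        comp_zero]
    have hf0 : pullback.fst m' (kernel.ι m) = 0 := by
      have : pullback.fst m' (kernel.ι m) ≫ (m' ≫ m) = 0 ≫ (m' ≫ m) := by
        simpa using hc
      exact (cancel_mono (m' ≫ m)).mp this
    exact isZero_of_mono_zero _ inferInstance hf0
  have hm : Mono m := mono_of_isZero_kernel m hker
  refine ⟨hm, fun N n hn hP => ?_⟩
  -- Step 2
  refine h.2 n hn ?_
  have hcond : (pullback.fst (m' ≫ m) n ≫ m') ≫ m = pullback.snd (m' ≫ m) n ≫ n := by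
    rw [Category.assoc, pullback.condition]
  let q : pullback (m' ≫ m) n ⟶ pullback m n :=
    pullback.lift (pullback.fst (m' ≫ m) n ≫ m') (pullback.snd (m' ≫ m) n) hcond
  have hq : q ≫ pullback.snd m n = pullback.snd (m' ≫ m) n := pullback.lift_snd _ _ _
  have hmono : Mono (q ≫ pullback.snd m n) := by rw [hq]; infer_instance
  have hqmono : Mono q := mono_of_mono q (pullback.snd m n)
  exact isZero_of_mono_zero q hqmono (hP.eq_of_tgt q 0)
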